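/- Let S and T be dependent 3-cutsets of G with S ∩ T = ∅. Then there exist vertices u ∈ T \ S and v ∈ S \ T with the following properties, where C denotes the connected component of G − S containing u and D denotes the connected component of G − T containing v: C ∩ D = ∅, T ∩ C = {u}, S ∩ D = {v}; the vertices u and v are adjacent; v is the only vertex of D ∪ T adjacent to u; and u is the only vertex of C ∪ S adjacent to v. -/

import Mathlib

/-!
Each of `S`, `T` splits the other: a component of `G - T` avoiding `S` would lie in one
component of `G - S`, hence be cut off by at most two vertices of `T`. By pigeonhole on three
vertices, some `u ∈ T` is alone in its component `C` of `G - S` and some `v ∈ S` is alone in its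
component `D` of `G - T`. Then `C ∩ D` has all its neighbours in `{u, v}` while missing a vertex
of `S`, so it is empty. Finally `u` has a neighbour in `D` (otherwise `T \ {u}` cuts `D` off),
and the only candidate is `v`.
-/

namespace Paper

variable {V : Type*}

/-- `S ⊆ V(G)` is a cutset of `G`: the graph `G − S` is disconnected. -/
def IsCutset (G : SimpleGraph V) (S : Set V) : Prop :=
  ¬ (G.induce (Sᶜ : Set V)).Connected

/-- A 3-cutset: a cutset of exactly 3 vertices. -/
def IsThreeCutset (G : SimpleGraph V) (S : Set V) : Prop :=
  S.ncard = 3 ∧ IsCutset G S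

/-- `G` is triconnected: at least 4 vertices and deleting any at most 2 vertices
leaves a connected graph. -/
def IsTriconnected [Fintype V] (G : SimpleGraph V) : Prop :=
  4 ≤ Fintype.card V ∧
    ∀ X : Set V, X.ncard ≤ 2 → (G.induce (Xᶜ : Set V)).Connected

/-- `x` and `y` both survive the deletion of `R` and lie in the same connected
component of `G − R`. -/
def ReachOutside (G : SimpleGraph V) (R : Set V) (x y : V) : Prop :=
  ∃ (hx : x ∈ (Rᶜ : Set V)) (hy : y ∈ (Rᶜ : Set V)),
    (G.induce (Rᶜ : Set V)).Reachable ⟨x, hx⟩ ⟨y, hy⟩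

/-- `R` splits `X`: two vertices of `X \ R` lie in different connected components
of `G − R`. -/
def Splits (G : SimpleGraph V) (R X : Set V) : Prop :=
  ∃ x ∈ X, ∃ y ∈ X, x ∉ R ∧ y ∉ R ∧ ¬ ReachOutside G R x y

/-- Two 3-cutsets are dependent iff one splits the other. -/
def Dependent (G : SimpleGraph V) (S T : Set V) : Prop :=
  Splits G S T ∨ Splits G T S

/-- The connected component of `G − R` containing `u` (empty if `u ∈ R`). -/
def compOutside (G : SimpleGraph V) (R : Set V) (u : V) : Set V :=
  {y | ReachOutside G R u y}

/-- `C` is a connected component of `G − R`. -/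
def IsCompOutside (G : SimpleGraph V) (R : Set V) (C : Set V) : Prop :=
  ∃ u, u ∉ R ∧ C = compOutside G R u

theorem exists_isolated_of_ncard_eq_three {α : Type*} {r : α → α → Prop}
    (hsymm : ∀ {a b}, r a b → r b a) (htrans : ∀ {a b c}, r a b → r b c → r a c)
    {X : Set α} (hX : X.ncard = 3) {x y : α} (hx : x ∈ X) (hy : y ∈ X) (hxy : ¬ r x y) :
    ∃ a ∈ X, ∀ b ∈ X, r a b → b = a := by
  by_contra! hpartner
  obtain ⟨z, hzX, hxz, hzx⟩ := hpartner x hx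
  obtain ⟨w, hwX, hyw, hwy⟩ := hpartner y hy
  have hne : x ≠ y := by rintro rfl; exact hxy (htrans hxz (hsymm hxz))
  have hzy : z ≠ y := by rintro rfl; exact hxy hxz
  have hwx : w ≠ x := by rintro rfl; exact hxy (hsymm hyw)
  -- `X \ {x, y}` is a singleton, containing both `z` and `w`.
  obtain ⟨c, hc⟩ : ∃ c, X \ {x, y} = {c} := by
    rw [← Set.ncard_eq_one, Set.ncard_sdiff (Set.pair_subset hx hy), hX, Set.ncard_pair hne]
  have hz : z ∈ X \ {x, y} := ⟨hzX, by simp [hzx, hzy]⟩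
  have hw : w ∈ X \ {x, y} := ⟨hwX, by simp [hwx, hwy]⟩
  rw [hc] at hz hw
  exact hxy (htrans hxz (hz.trans hw.symm ▸ hsymm hyw))

variable {G : SimpleGraph V} {R S T X Z : Set V} {u v w x y z : V}

namespace ReachOutside

theorem refl (hx : x ∉ R) : ReachOutside G R x x :=
  ⟨hx, hx, .rfl⟩

theorem symm (h : ReachOutside G R x y) : ReachOutside G R y x :=
  let ⟨hx, hy, hr⟩ := h; ⟨hy, hx, hr.symm⟩

theorem trans (hxy : ReachOutside G R x y) (hyz : ReachOutside G R y z) :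
    ReachOutside G R x z :=
  let ⟨hx, _, hr⟩ := hxy; let ⟨_, hz, hr'⟩ := hyz; ⟨hx, hz, hr.trans hr'⟩

theorem notMem_left (h : ReachOutside G R x y) : x ∉ R := h.1

theorem notMem_right (h : ReachOutside G R x y) : y ∉ R := h.2.1

theorem of_adj (hx : x ∉ R) (hy : y ∉ R) (h : G.Adj x y) : ReachOutside G R x y :=
  ⟨hx, hy, SimpleGraph.Adj.reachable (G := G.induce Rᶜ) (u := ⟨x, hx⟩) (v := ⟨y, hy⟩) h⟩

theorem trans_adj (h : ReachOutside G R x y) (hyz : G.Adj y z) (hz : z ∉ R) :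
    ReachOutside G R x z :=
  h.trans (of_adj h.notMem_right hz hyz)

theorem mem_of_adj_closed (hxZ : x ∈ Z)
    (hZ : ∀ a ∈ Z, ∀ b, G.Adj a b → b ∉ R → b ∈ Z) (h : ReachOutside G R x y) : y ∈ Z := by
  obtain ⟨hx, hy, ⟨p⟩⟩ := h
  suffices ∀ (a b : (Rᶜ : Set V)), (G.induce Rᶜ).Walk a b → (a : V) ∈ Z → (b : V) ∈ Z from
    this _ _ p hxZ
  intro a b p
  induction p with
  | nil => exact id
  | @cons a b c hab _ ih => exact fun ha => ih (hZ a ha b hab b.2)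

end ReachOutside

theorem mem_diff_of_inter_compOutside_eq_singleton (h : X ∩ compOutside G R x = {x}) :
    x ∈ X \ R := by
  have hx : x ∈ X ∩ compOutside G R x := h ▸ rfl
  exact ⟨hx.1, ReachOutside.notMem_left hx.2⟩

theorem eq_of_mem_inter_compOutside (h : X ∩ compOutside G R x = {x}) (hyX : y ∈ X)
    (hy : y ∈ compOutside G R x) : y = x :=
  (h ▸ ⟨hyX, hy⟩ : y ∈ ({x} : Set V))

theorem Splits.exists_inter_compOutside_eq_singleton (h : Splits G R X) (hX : X.ncard = 3)
    (hXR : Disjoint X R) : ∃ x, X ∩ compOutside G R x = {x} := by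
  obtain ⟨x₁, hx₁, x₂, hx₂, -, -, hx₁₂⟩ := h
  obtain ⟨a, haX, ha⟩ := exists_isolated_of_ncard_eq_three (r := ReachOutside G R)
    ReachOutside.symm ReachOutside.trans hX hx₁ hx₂ hx₁₂
  exact ⟨a, Set.eq_singleton_iff_unique_mem.mpr
    ⟨⟨haX, ReachOutside.refl (hXR.notMem_of_mem_left haX)⟩, fun b hb => ha b hb.1 hb.2⟩⟩

theorem IsCutset.exists_not_reachOutside (hR : IsCutset G R) (hne : Rᶜ.Nonempty) :
    ∃ x ∉ R, ∃ y ∉ R, ¬ ReachOutside G R x y := by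
  by_contra! h
  have := hne.to_subtype
  exact hR ⟨fun a b => (h a a.2 b b.2).2.2⟩

namespace IsTriconnected

variable [Fintype V]

theorem compl_nonempty (htri : IsTriconnected G) (hX : X.ncard ≤ 3) : Xᶜ.Nonempty := by
  rw [Set.nonempty_compl]
  rintro rfl
  have := htri.1
  rw [Set.ncard_univ, Nat.card_eq_fintype_card] at hX
  omega

theorem mem_of_adj_closed (htri : IsTriconnected G) (hX : X.ncard ≤ 2)
    (hZ : ∀ a ∈ Z, ∀ b, G.Adj a b → b ∈ Z ∨ b ∈ X) (hzZ : z ∈ Z) (hzX : z ∉ X) (hwX : w ∉ X) :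
    w ∈ Z :=
  ReachOutside.mem_of_adj_closed hzZ (fun a ha b hab hb => (hZ a ha b hab).resolve_right hb)
    ⟨hzX, hwX, (htri.2 X hX).preconnected _ _⟩

theorem exists_adj_mem_compOutside (htri : IsTriconnected G) (hT : T.ncard ≤ 3) (hu : u ∈ T)
    (hv : v ∉ T) : ∃ y ∈ compOutside G T v, G.Adj u y := by
  by_contra! hnone
  have hX : (T \ {u}).ncard ≤ 2 := by rw [Set.ncard_sdiff_singleton_of_mem hu]; omega
  have huD : u ∈ compOutside G T v := by
    refine htri.mem_of_adj_closed hX (fun a ha b hab => ?_) (ReachOutside.refl hv)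
      (fun h => hv h.1) (by simp)
    by_cases hbT : b ∈ T
    · exact Or.inr ⟨hbT, by rintro rfl; exact hnone a ha hab.symm⟩
    · exact Or.inl (ReachOutside.trans_adj ha hab hbT)
  exact ReachOutside.notMem_right huD hu

/-- A component `Z` of `G - T` avoiding `S` lies inside one component `K` of `G - S`, so all
neighbours of `Z` lie in `T ∩ K`, which has at most two vertices because `S` splits `T`. -/
theorem exists_reachOutside_mem_of_splits (htri : IsTriconnected G) (hT : T.ncard ≤ 3)
    (hS : S.Nonempty) (hST : Disjoint S T) (hsplit : Splits G S T) (hx : x ∉ T) :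
    ∃ s ∈ S, ReachOutside G T x s := by
  by_contra! hZS
  set Z := compOutside G T x
  set K := compOutside G S x
  have hxS : x ∉ S := fun hxS => hZS x hxS (ReachOutside.refl hx)
  have hZK : ∀ z ∈ Z, z ∈ K := fun z hz =>
    (ReachOutside.mem_of_adj_closed (Z := {z | z ∈ Z ∧ z ∈ K})
      ⟨ReachOutside.refl hx, ReachOutside.refl hxS⟩
      (fun a ⟨haZ, haK⟩ b hab hbT =>
        have hbZ : b ∈ Z := haZ.trans_adj hab hbT
        ⟨hbZ, haK.trans_adj hab fun hbS => hZS b hbS hbZ⟩) hz).2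
  obtain ⟨t₁, ht₁, t₂, ht₂, -, -, ht₁₂⟩ := hsplit
  obtain ⟨t₀, ht₀T, ht₀K⟩ : ∃ t ∈ T, t ∉ K := by
    by_contra! hTK
    exact ht₁₂ ((hTK t₁ ht₁).symm.trans (hTK t₂ ht₂))
  have hX : (T ∩ K).ncard ≤ 2 := by
    have : T ∩ K ⊆ T \ {t₀} := fun t ⟨htT, htK⟩ => ⟨htT, by rintro rfl; exact ht₀K htK⟩
    have := Set.ncard_le_ncard this
    rw [Set.ncard_sdiff_singleton_of_mem ht₀T] at this
    omega
  obtain ⟨s, hs⟩ := hS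
  refine hZS s hs (htri.mem_of_adj_closed (Z := Z) hX (fun a ha b hab => ?_)
    (ReachOutside.refl hx) (fun h => hx h.1) (fun h => hST.notMem_of_mem_left hs h.1))
  by_cases hbT : b ∈ T
  · exact Or.inr ⟨hbT, (hZK a ha).trans_adj hab (hST.notMem_of_mem_right hbT)⟩
  · exact Or.inl (ReachOutside.trans_adj ha hab hbT)

theorem splits_swap (htri : IsTriconnected G) (hS : S.Nonempty) (hT : IsThreeCutset G T)
    (hST : Disjoint S T) (h : Splits G S T) : Splits G T S := by
  obtain ⟨x, hx, y, hy, hxy⟩ :=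
    hT.2.exists_not_reachOutside (htri.compl_nonempty hT.1.le)
  obtain ⟨s, hs, hxs⟩ := htri.exists_reachOutside_mem_of_splits hT.1.le hS hST h hx
  obtain ⟨s', hs', hys'⟩ := htri.exists_reachOutside_mem_of_splits hT.1.le hS hST h hy
  exact ⟨s, hs, s', hs', hST.notMem_of_mem_left hs, hST.notMem_of_mem_left hs',
    fun hss' => hxy (hxs.trans (hss'.trans hys'.symm))⟩

theorem splits_of_dependent (htri : IsTriconnected G) (hS : IsThreeCutset G S)
    (hT : IsThreeCutset G T) (hST : Disjoint S T) (h : Dependent G S T) :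
    Splits G S T ∧ Splits G T S := by
  have hSne : S.Nonempty := Set.nonempty_of_ncard_ne_zero (by rw [hS.1]; norm_num)
  have hTne : T.Nonempty := Set.nonempty_of_ncard_ne_zero (by rw [hT.1]; norm_num)
  rcases h with h | h
  · exact ⟨h, htri.splits_swap hSne hT hST h⟩
  · exact ⟨htri.splits_swap hTne hS hST.symm h, h⟩

/-- All neighbours of the intersection lie in `{u, v}`, while it misses the vertices of `S`
other than `v`. -/
theorem compOutside_inter_compOutside_eq_empty (htri : IsTriconnected G) (hS : 1 < S.ncard)
    (hST : Disjoint S T) (hu : T ∩ compOutside G S u = {u}) (hv : S ∩ compOutside G T v = {v}) :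
    compOutside G S u ∩ compOutside G T v = ∅ := by
  by_contra! hne
  obtain ⟨z, hzC, hzD⟩ := hne
  obtain ⟨s, hs, hsv⟩ := Set.exists_ne_of_one_lt_ncard hS v
  have huT := (mem_diff_of_inter_compOutside_eq_singleton hu).1
  have hX : ({u, v} : Set V).ncard ≤ 2 := (Set.ncard_insert_le _ _).trans (by simp)
  have hsC : s ∈ compOutside G S u := by
    refine (htri.mem_of_adj_closed hX (Z := compOutside G S u ∩ compOutside G T v)
      (fun a ⟨haC, haD⟩ b hab => ?_) ⟨hzC, hzD⟩ ?_ ?_).1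
    · by_cases hbS : b ∈ S
      · exact Or.inr (.inr (eq_of_mem_inter_compOutside hv hbS
          (haD.trans_adj hab (hST.notMem_of_mem_left hbS))))
      by_cases hbT : b ∈ T
      · exact Or.inr (.inl (eq_of_mem_inter_compOutside hu hbT (haC.trans_adj hab hbS)))
      exact Or.inl ⟨haC.trans_adj hab hbS, haD.trans_adj hab hbT⟩
    · rintro (rfl | rfl)
      · exact hzD.notMem_right huT
      · exact hzC.notMem_right (mem_diff_of_inter_compOutside_eq_singleton hv).1
    · rintro (rfl | rfl)
      · exact hST.notMem_of_mem_left hs huT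
      · exact hsv rfl
  exact hsC.notMem_right hs

end IsTriconnected

theorem eq_of_adj_of_compOutside_inter_eq_empty (hST : Disjoint S T)
    (hu : T ∩ compOutside G S u = {u}) (hv : S ∩ compOutside G T v = {v})
    (hCD : compOutside G S u ∩ compOutside G T v = ∅) :
    ∀ w ∈ compOutside G T v ∪ T, G.Adj u w → w = v := by
  rintro w hw huw
  have huS := (mem_diff_of_inter_compOutside_eq_singleton hu).2
  by_cases hwS : w ∈ S
  · rcases hw with hwD | hwT
    · exact eq_of_mem_inter_compOutside hv hwS hwD
    · exact absurd hwT (hST.notMem_of_mem_left hwS)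
  have hwC : w ∈ compOutside G S u := ReachOutside.of_adj huS hwS huw
  rcases hw with hwD | hwT
  · exact absurd (hCD ▸ ⟨hwC, hwD⟩ : w ∈ (∅ : Set V)) id
  · exact absurd (eq_of_mem_inter_compOutside hu hwT hwC ▸ huw) G.irrefl

theorem stmt_1_general [Fintype V] (G : SimpleGraph V)
    (htri : IsTriconnected G)
    (S T : Set V) (hS : IsThreeCutset G S) (hT : IsThreeCutset G T)
    (hdep : Dependent G S T) (hST : S ∩ T = ∅) :
    ∃ u ∈ T \ S, ∃ v ∈ S \ T,
      compOutside G S u ∩ compOutside G T v = ∅ ∧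
      T ∩ compOutside G S u = {u} ∧
      S ∩ compOutside G T v = {v} ∧
      G.Adj u v ∧
      (∀ w ∈ compOutside G T v ∪ T, G.Adj u w → w = v) ∧
      (∀ w ∈ compOutside G S u ∪ S, G.Adj v w → w = u) := by
  have hdisj : Disjoint S T := Set.disjoint_iff_inter_eq_empty.mpr hST
  obtain ⟨hsplitST, hsplitTS⟩ := htri.splits_of_dependent hS hT hdisj hdep
  obtain ⟨u, hu⟩ := hsplitST.exists_inter_compOutside_eq_singleton hT.1 hdisj.symm
  obtain ⟨v, hv⟩ := hsplitTS.exists_inter_compOutside_eq_singleton hS.1 hdisj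
  have huTS := mem_diff_of_inter_compOutside_eq_singleton hu
  have hvST := mem_diff_of_inter_compOutside_eq_singleton hv
  have hCD := htri.compOutside_inter_compOutside_eq_empty (by rw [hS.1]; norm_num) hdisj hu hv
  have hu_nbrs := eq_of_adj_of_compOutside_inter_eq_empty hdisj hu hv hCD
  have hv_nbrs := eq_of_adj_of_compOutside_inter_eq_empty hdisj.symm hv hu
    (by rw [Set.inter_comm, hCD])
  obtain ⟨y, hyD, huy⟩ := htri.exists_adj_mem_compOutside hT.1.le huTS.1 hvST.2
  have huv : G.Adj u v := hu_nbrs y (.inl hyD) huy ▸ huy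
  exact ⟨u, huTS, v, hvST, hCD, hu, hv, huv, hu_nbrs, hv_nbrs⟩

/-- Corollary 2: dependent disjoint 3-cutsets give a small part `{u, v}`. -/
theorem stmt_1 [Fintype V] (G : SimpleGraph V)
    (htri : IsTriconnected G) (hbig : 6 < Fintype.card V)
    (S T : Set V) (hS : IsThreeCutset G S) (hT : IsThreeCutset G T)
    (hdep : Dependent G S T) (hST : S ∩ T = ∅) :
    ∃ u ∈ T \ S, ∃ v ∈ S \ T,
      compOutside G S u ∩ compOutside G T v = ∅ ∧
      T ∩ compOutside G S u = {u} ∧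
      S ∩ compOutside G T v = {v} ∧
      G.Adj u v ∧
      (∀ w ∈ compOutside G T v ∪ T, G.Adj u w → w = v) ∧
      (∀ w ∈ compOutside G S u ∪ S, G.Adj v w → w = u) :=
  stmt_1_general G htri S T hS hT hdep hST

end Paper
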